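/- Let σ* be a positive definite hermitian n×n matrix and φ a hermitian n×n matrix. Then L_{σ*}⁻¹(φ) commutes with σ* if and only if φ commutes with σ*. -/

import Mathlib

open Matrix
open scoped ComplexOrder

/-- The old Mathlib `Matrix.PosSemidef.sqrt` (removed from Mathlib), with its old definition. -/
noncomputable def Matrix.PosSemidef.sqrt {n 𝕜 : Type*} [Fintype n] [DecidableEq n] [RCLike 𝕜]
    {A : Matrix n n 𝕜} (hA : A.PosSemidef) : Matrix n n 𝕜 :=
  (hA.1.eigenvectorUnitary : Matrix n n 𝕜) *
    diagonal ((↑) ∘ (√·) ∘ hA.1.eigenvalues) * (star hA.1.eigenvectorUnitary : Matrix n n 𝕜)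

noncomputable def traceNorm {ι : Type*} [Fintype ι] [DecidableEq ι]
    (A : Matrix ι ι ℂ) : ℝ :=
  ((Matrix.posSemidef_conjTranspose_mul_self A).sqrt.trace).re

noncomputable def mfun {ι : Type*} [Fintype ι] [DecidableEq ι] (g : ℝ → ℝ)
    (A : Matrix ι ι ℂ) : Matrix ι ι ℂ :=
  if hA : A.IsHermitian then
    (hA.eigenvectorUnitary : Matrix ι ι ℂ) *
      Matrix.diagonal (fun i => (g (hA.eigenvalues i) : ℂ)) *
      (star hA.eigenvectorUnitary : Matrix ι ι ℂ)
  else 0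

noncomputable def divDiff {ι : Type*} (g : ℝ → ℝ) (a : ι → ℝ) : Matrix ι ι ℝ :=
  Matrix.of fun i j =>
    if a i = a j then deriv g (a i) else (g (a i) - g (a j)) / (a i - a j)

noncomputable def Dop {ι : Type*} [Fintype ι] [DecidableEq ι] (g : ℝ → ℝ)
    {A : Matrix ι ι ℂ} (hA : A.IsHermitian) (B : Matrix ι ι ℂ) : Matrix ι ι ℂ :=
  (hA.eigenvectorUnitary : Matrix ι ι ℂ) *
    (((divDiff g hA.eigenvalues).map Complex.ofReal) ⊙
      ((star hA.eigenvectorUnitary : Matrix ι ι ℂ) * B *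
        (hA.eigenvectorUnitary : Matrix ι ι ℂ))) *
    (star hA.eigenvectorUnitary : Matrix ι ι ℂ)

noncomputable def relEnt {ι : Type*} [Fintype ι] [DecidableEq ι]
    (ρ σ : Matrix ι ι ℂ) : ℝ :=
  ((ρ * (mfun Real.log ρ - mfun Real.log σ)).trace).re

def ptrans {m n : Type*} (A : Matrix (m × n) (m × n) ℂ) : Matrix (m × n) (m × n) ℂ :=
  Matrix.of fun p q => A (p.1, q.2) (q.1, p.2)

noncomputable def divDiffInv {ι : Type*} (g : ℝ → ℝ) (a : ι → ℝ) : Matrix ι ι ℝ :=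
  Matrix.of fun i j =>
    if a i = a j then 1 / deriv g (a i) else (a i - a j) / (g (a i) - g (a j))

noncomputable def Dinv {ι : Type*} [Fintype ι] [DecidableEq ι] (g : ℝ → ℝ)
    {A : Matrix ι ι ℂ} (hA : A.IsHermitian) (B : Matrix ι ι ℂ) : Matrix ι ι ℂ :=
  (hA.eigenvectorUnitary : Matrix ι ι ℂ) *
    (((divDiffInv g hA.eigenvalues).map Complex.ofReal) ⊙
      ((star hA.eigenvectorUnitary : Matrix ι ι ℂ) * B *
        (hA.eigenvectorUnitary : Matrix ι ι ℂ))) *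
    (star hA.eigenvectorUnitary : Matrix ι ι ℂ)

/-!
Conjugation by the eigenvector unitary `U` of `σ` turns `σ` into `diagonal a` and
`L_σ⁻¹` into the Hadamard product with `S_log`. A matrix commutes with `diagonal a` exactly
when its entries vanish wherever `aᵢ ≠ aⱼ`, and there `S_log` has the nonzero entries
`(aᵢ - aⱼ) / (log aᵢ - log aⱼ)` because `log` is injective on `(0, ∞)`; so the Hadamard product
with `S_log` does not change which of those entries vanish.
-/

open Unitary

namespace Matrix

variable {n R : Type*} [Fintype n] [DecidableEq n]

theorem commute_diagonal_iff [CommRing R] [NoZeroDivisors R] {B : Matrix n n R} {d : n → R} :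
    Commute B (diagonal d) ↔ ∀ i j, d i ≠ d j → B i j = 0 := by
  have entry (i j : n) :
      (B * diagonal d) i j = (diagonal d * B) i j ↔ (d j - d i) * B i j = 0 := by
    rw [mul_diagonal, diagonal_mul, sub_mul, sub_eq_zero, mul_comm]
  refine ⟨fun h i j hij => ?_, fun h => ext fun i j => (entry i j).mpr ?_⟩
  · exact ((mul_eq_zero.mp ((entry i j).mp (by rw [h.eq]))).resolve_left
      (sub_ne_zero.mpr (Ne.symm hij)))
  · by_cases hij : d i = d j
    · rw [hij, sub_self, zero_mul]
    · rw [h i j hij, mul_zero]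

theorem commute_hadamard_diagonal_iff [CommRing R] [NoZeroDivisors R] {S B : Matrix n n R}
    {d : n → R} (hS : ∀ i j, d i ≠ d j → S i j ≠ 0) :
    Commute (S ⊙ B) (diagonal d) ↔ Commute B (diagonal d) := by
  simp only [commute_diagonal_iff, hadamard_apply]
  exact forall₂_congr fun i j => imp_congr_right fun hij => by simp [hS i j hij]

end Matrix

theorem divDiffInv_ne_zero {ι : Type*} {g : ℝ → ℝ} {a : ι → ℝ} {s : Set ℝ} (hg : s.InjOn g)
    (ha : ∀ i, a i ∈ s) {i j : ι} (hij : a i ≠ a j) : divDiffInv g a i j ≠ 0 := by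
  rw [divDiffInv, of_apply, if_neg hij]
  exact div_ne_zero (sub_ne_zero.mpr hij) (sub_ne_zero.mpr (hg.ne (ha i) (ha j) hij))

theorem commute_Dinv_iff {ι : Type*} [Fintype ι] [DecidableEq ι] {g : ℝ → ℝ} {s : Set ℝ}
    {A : Matrix ι ι ℂ} (hA : A.IsHermitian) (hg : s.InjOn g) (hs : ∀ i, hA.eigenvalues i ∈ s)
    (B : Matrix ι ι ℂ) :
    Commute (Dinv g hA B) A ↔ Commute B A := by
  set conj := conjStarAlgAut ℂ _ hA.eigenvectorUnitary
  set d : ι → ℂ := RCLike.ofReal ∘ hA.eigenvalues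
  set S := (divDiffInv g hA.eigenvalues).map Complex.ofReal
  have hAconj : A = conj (diagonal d) := hA.spectral_theorem
  have hS (i j : ι) (hij : d i ≠ d j) : S i j ≠ 0 :=
    Complex.ofReal_ne_zero.mpr
      (divDiffInv_ne_zero hg hs fun h => hij (congrArg (RCLike.ofReal : ℝ → ℂ) h))
  calc Commute (Dinv g hA B) A ↔ Commute (conj (S ⊙ conj.symm B)) (conj (diagonal d)) := by
        rw [← hAconj]; rfl
    _ ↔ Commute (S ⊙ conj.symm B) (diagonal d) := commute_map_iff conj.injective
    _ ↔ Commute (conj.symm B) (diagonal d) := commute_hadamard_diagonal_iff hS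
    _ ↔ Commute B A := by
        rw [← commute_map_iff (f := conj) conj.injective, conj.apply_symm_apply, ← hAconj]

theorem Linv_commute_iff_commute_general
    {N : ℕ} (σs φ : Matrix (Fin N) (Fin N) ℂ) (hσs : σs.PosDef) :
    Commute (Dinv Real.log hσs.1 φ) σs ↔ Commute φ σs :=
  commute_Dinv_iff hσs.1 Real.log_injOn_pos hσs.eigenvalues_pos φ

theorem Linv_commute_iff_commute
    {N : ℕ} (σs φ : Matrix (Fin N) (Fin N) ℂ) (hσs : σs.PosDef)
    (hφ : φ.IsHermitian) :
    Commute (Dinv Real.log hσs.1 φ) σs ↔ Commute φ σs :=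
  Linv_commute_iff_commute_general σs φ hσs
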